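/- arXiv:2505.00968 — 4 statements merged into one kernel-verified Lean document; each statement's English description precedes it below -/
import Mathlib

section
/- Injectivity of the Circular Radon Transform on Systems of Lines (Theorem 4.1, functional form): Let d, k ≥ 1 and let α : ℝ^d × (ℝ^d × S^{d-1})^k → Δ_{k-1} be an E(d)-invariant splitting map. Suppose f, g : ℝ^d → ℝ are Lebesgue integrable and that for every system of k lines 𝓛 = ((x_1,θ_1),…,(x_k,θ_k)), every r ≥ 0, every index i ∈ {1,…,k}, and every bounded continuous function φ : ℝ → ℝ one has ∫_{ℝ^d} f(y)·α(y,𝓛)_i·φ(‖y − x_i − r·θ_i‖) dy = ∫_{ℝ^d} g(y)·α(y,𝓛)_i·φ(‖y − x_i − r·θ_i‖) dy. Then f = g Lebesgue-almost everywhere. -/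
open MeasureTheory
open scoped InnerProductSpace

noncomputable section

/-- `d`-dimensional Euclidean space. -/
abbrev Euc (d : ℕ) := EuclideanSpace ℝ (Fin d)

/-- The unit sphere `S^{d-1}` in `ℝ^d`. -/
abbrev Sph (d : ℕ) := Metric.sphere (0 : Euc d) 1

/-- A system of `k` lines in `ℝ^d`: each line is a pair (source, direction). -/
abbrev LineSystem (d k : ℕ) := Fin k → Euc d × Sph d

/-- The action of a linear isometry equivalence on the unit sphere. -/
def sphIso {d : ℕ} (Q : Euc d ≃ₗᵢ[ℝ] Euc d) (θ : Sph d) : Sph d :=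
  ⟨Q (θ : Euc d), by
    rw [mem_sphere_zero_iff_norm, Q.norm_map]
    exact mem_sphere_zero_iff_norm.mp θ.2⟩

/-- The action of the Euclidean group `E(d)` (an isometry `Q` together with a
translation `a`) on a system of lines. -/
def actLine {d k : ℕ} (Q : Euc d ≃ₗᵢ[ℝ] Euc d) (a : Euc d) (L : LineSystem d k) :
    LineSystem d k :=
  fun i => (Q (L i).1 + a, sphIso Q (L i).2)

/-! Only systems whose `k` lines share one source `c` are needed. For them, at `r = 0` the test
function `φ ‖y - c‖` is the same for every line, and summing the `k` identities removes the
splitting map, whose weights add up to `1`. So `f` and `g` have equal integrals against all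
bounded continuous radial functions about every centre; approximating indicators of closed balls
by such functions gives equal integrals over all balls, and Lebesgue's differentiation theorem
gives `f = g` almost everywhere. -/

open Metric Filter Topology Set
open scoped NNReal BoundedContinuousFunction

theorem integral_eq_sum_integral_mul_of_mem_stdSimplex {X ι : Type*} [MeasurableSpace X]
    [Fintype ι] {μ : Measure X} {v : X → ℝ} (hv : Integrable v μ)
    {w : X → ι → ℝ} (hw : ∀ i, AEStronglyMeasurable (fun x => w x i) μ)
    (hw_simplex : ∀ x, w x ∈ stdSimplex ℝ ι) :
    ∫ x, v x ∂μ = ∑ i, ∫ x, v x * w x i ∂μ := by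
  have hint : ∀ i, Integrable (fun x => v x * w x i) μ := fun i =>
    hv.mul_bdd (hw i) (.of_forall fun x => by
      obtain ⟨hnonneg, hle_one⟩ := mem_Icc_of_mem_stdSimplex (hw_simplex x) i
      rwa [Real.norm_of_nonneg hnonneg])
  rw [← integral_finsetSum _ fun i _ => hint i]
  simp_rw [← Finset.mul_sum, (hw_simplex _).2, mul_one]

theorem setIntegral_closedBall_eq_of_forall_integral_mul_comp_dist_eq {X : Type*}
    [PseudoMetricSpace X] [MeasurableSpace X] [OpensMeasurableSpace X] {μ : Measure X}
    {f g : X → ℝ} (hf : Integrable f μ) (hg : Integrable g μ) (c : X)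
    (hfg : ∀ φ : ℝ →ᵇ ℝ, ∫ y, f y * φ (dist y c) ∂μ = ∫ y, g y * φ (dist y c) ∂μ) (R : ℝ) :
    ∫ y in closedBall c R, f y ∂μ = ∫ y in closedBall c R, g y ∂μ := by
  have hδ : ∀ n : ℕ, (0 : ℝ) < 1 / (n + 1) := fun n => Nat.one_div_pos_of_nat
  let φ : ℕ → ℝ →ᵇ ℝ := fun n =>
    (thickenedIndicator (hδ n) (Iic R)).comp (↑) isometry_subtype_coe.lipschitz
  have hφ_lim : ∀ y, Tendsto (fun n => φ n (dist y c)) atTop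
      (𝓝 ((closedBall c R).indicator 1 y)) := by
    intro y
    have := tendsto_pi_nhds.1 (thickenedIndicator_tendsto_indicator_closure hδ
      tendsto_one_div_add_atTop_nhds_zero_nat (Iic R)) (dist y c)
    rw [closure_Iic] at this
    convert (NNReal.continuous_coe.tendsto _).comp this using 2
    · rfl
    by_cases hy : y ∈ closedBall c R <;> simp_all [mem_closedBall]
  have hφ_le : ∀ n t, ‖φ n t‖ ≤ 1 := fun n t => by
    show ‖((thickenedIndicator (hδ n) (Iic R) t : ℝ≥0) : ℝ)‖ ≤ 1
    rw [NNReal.norm_eq]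
    exact_mod_cast thickenedIndicator_le_one (hδ n) (Iic R) t
  have hlim : ∀ u : X → ℝ, Integrable u μ → Tendsto (fun n => ∫ y, u y * φ n (dist y c) ∂μ)
      atTop (𝓝 (∫ y in closedBall c R, u y ∂μ)) := by
    intro u hu
    rw [← integral_indicator measurableSet_closedBall]
    refine tendsto_integral_of_dominated_convergence (fun y => ‖u y‖) (fun n => ?_) hu.norm
      (fun n => .of_forall fun y => ?_) (.of_forall fun y => ?_)
    · exact hu.aestronglyMeasurable.mul
        ((φ n).continuous.comp (continuous_id.dist continuous_const)).aestronglyMeasurable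
    · rw [norm_mul]
      exact mul_le_of_le_one_right (norm_nonneg _) (hφ_le n _)
    · convert (hφ_lim y).const_mul (u y) using 2
      by_cases hy : y ∈ closedBall c R <;> simp [hy]
  exact tendsto_nhds_unique ((hlim f hf).congr fun n => hfg (φ n)) (hlim g hg)

section Doubling

variable {X : Type*} [PseudoMetricSpace X] [MeasurableSpace X] [BorelSpace X]
  [SecondCountableTopology X] {μ : Measure X} [IsUnifLocDoublingMeasure μ]
  [IsLocallyFiniteMeasure μ]

theorem ae_eq_zero_of_forall_setIntegral_closedBall_eq_zero {E : Type*} [NormedAddCommGroup E]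
    [NormedSpace ℝ E] [CompleteSpace E] {h : X → E} (hh : LocallyIntegrable h μ)
    (h0 : ∀ x, ∀ r > 0, ∫ y in closedBall x r, h y ∂μ = 0) : h =ᵐ[μ] 0 := by
  filter_upwards [IsUnifLocDoublingMeasure.ae_tendsto_average μ hh 1] with x hx
  have hball : ∀ᶠ r in 𝓝[>] (0 : ℝ), x ∈ closedBall x (1 * r) :=
    eventually_mem_nhdsWithin.mono fun r hr => mem_closedBall_self (by simpa using hr.le)
  have hzero : ∀ᶠ r in 𝓝[>] (0 : ℝ), ⨍ y in closedBall x r, h y ∂μ = 0 :=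
    eventually_mem_nhdsWithin.mono fun r hr => by rw [setAverage_eq, h0 x r hr, smul_zero]
  exact tendsto_nhds_unique (hx (fun _ => x) id tendsto_id hball)
    (tendsto_const_nhds.congr' (hzero.mono fun _ h => h.symm))

theorem ae_eq_of_forall_integral_mul_comp_dist_eq {f g : X → ℝ} (hf : Integrable f μ)
    (hg : Integrable g μ)
    (hfg : ∀ c (φ : ℝ →ᵇ ℝ), ∫ y, f y * φ (dist y c) ∂μ = ∫ y, g y * φ (dist y c) ∂μ) :
    f =ᵐ[μ] g := by
  rw [← sub_ae_eq_zero]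
  refine ae_eq_zero_of_forall_setIntegral_closedBall_eq_zero (hf.sub hg).locallyIntegrable
    fun c r _ => ?_
  rw [Pi.sub_def, integral_sub hf.integrableOn hg.integrableOn, sub_eq_zero]
  exact setIntegral_closedBall_eq_of_forall_integral_mul_comp_dist_eq hf hg c (hfg c) r

end Doubling

theorem circular_radon_transform_systems_of_lines_injective_general
    (d k : ℕ) (hd : 1 ≤ d)
    (α : Euc d × LineSystem d k → Fin k → ℝ)
    (hα_cont : Continuous α)
    (hα_simplex : ∀ p, α p ∈ stdSimplex ℝ (Fin k))
    (f g : Euc d → ℝ)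
    (hf : Integrable f) (hg : Integrable g)
    (heq : ∀ (L : LineSystem d k) (r : ℝ), 0 ≤ r → ∀ (i : Fin k) (φ : ℝ → ℝ),
      Continuous φ → (∃ C, ∀ t, |φ t| ≤ C) →
      ∫ y, f y * α (y, L) i * φ (‖y - (L i).1 - r • ((L i).2 : Euc d)‖)
        = ∫ y, g y * α (y, L) i * φ (‖y - (L i).1 - r • ((L i).2 : Euc d)‖)) :
  f =ᵐ[volume] g := by
  obtain ⟨θ⟩ : Nonempty (Sph d) := ⟨⟨EuclideanSpace.single ⟨0, hd⟩ 1, by simp⟩⟩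
  refine ae_eq_of_forall_integral_mul_comp_dist_eq hf hg fun c φ => ?_
  let L : LineSystem d k := fun _ => (c, θ)
  have hα_meas : ∀ i, AEStronglyMeasurable (fun y => α (y, L) i) volume := fun i =>
    ((continuous_apply i).comp (hα_cont.comp (continuous_id.prodMk continuous_const)))
      |>.aestronglyMeasurable
  have hφ_int : ∀ u : Euc d → ℝ, Integrable u → Integrable (fun y => u y * φ (dist y c)) :=
    fun u hu => hu.mul_bdd
      (φ.continuous.comp (continuous_id.dist continuous_const)).aestronglyMeasurable
      (.of_forall fun _ => φ.norm_coe_le_norm _)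
  rw [integral_eq_sum_integral_mul_of_mem_stdSimplex (hφ_int f hf) hα_meas fun _ => hα_simplex _,
    integral_eq_sum_integral_mul_of_mem_stdSimplex (hφ_int g hg) hα_meas fun _ => hα_simplex _]
  refine Finset.sum_congr rfl fun i _ => ?_
  simpa [L, dist_eq_norm, mul_right_comm] using
    heq L 0 le_rfl i φ φ.continuous ⟨‖φ‖, φ.norm_coe_le_norm⟩

/-- Injectivity of the Circular Radon Transform on Systems of Lines
(functional form). -/
theorem circular_radon_transform_systems_of_lines_injective
    (d k : ℕ) (hd : 1 ≤ d) (hk : 1 ≤ k)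
    (α : Euc d × LineSystem d k → Fin k → ℝ)
    (hα_cont : Continuous α)
    (hα_simplex : ∀ p, α p ∈ stdSimplex ℝ (Fin k))
    (hα_inv : ∀ (Q : Euc d ≃ₗᵢ[ℝ] Euc d) (a y : Euc d) (L : LineSystem d k),
      α (Q y + a, actLine Q a L) = α (y, L))
    (f g : Euc d → ℝ)
    (hf : Integrable f) (hg : Integrable g)
    (heq : ∀ (L : LineSystem d k) (r : ℝ), 0 ≤ r → ∀ (i : Fin k) (φ : ℝ → ℝ),
      Continuous φ → (∃ C, ∀ t, |φ t| ≤ C) →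
      ∫ y, f y * α (y, L) i * φ (‖y - (L i).1 - r • ((L i).2 : Euc d)‖)
        = ∫ y, g y * α (y, L) i * φ (‖y - (L i).1 - r • ((L i).2 : Euc d)‖)) :
    f =ᵐ[volume] g :=
  circular_radon_transform_systems_of_lines_injective_general d k hd α hα_cont hα_simplex f g hf hg
    heq
end
end

section
/- Injectivity of the Circular Radon Transform on Systems of Lines (Theorem 4.1, measure form): Let d, k ≥ 1 and let α : ℝ^d × (ℝ^d × S^{d-1})^k → Δ_{k-1} be an E(d)-invariant splitting map. Let μ, ν be finite Borel measures on ℝ^d. If for every system of k lines 𝓛 = ((x_1,θ_1),…,(x_k,θ_k)), every r ≥ 0, and every index i ∈ {1,…,k}, the i-th branch of the Circular Radon Transform on Systems of Lines of μ equals the i-th branch of the Circular Radon Transform on Systems of Lines of ν, then μ = ν. -/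
open MeasureTheory
open scoped InnerProductSpace

noncomputable section

/-- The `i`-th branch of the Circular Radon Transform on Systems of Lines of a
measure `μ`: push forward the measure `μ` weighted with density `α(·,𝓛)_i`
under `y ↦ ‖y − x_i − r·θ_i‖`. -/
def circBranch {d k : ℕ} (α : Euc d × LineSystem d k → Fin k → ℝ)
    (L : LineSystem d k) (r : ℝ) (i : Fin k) (μ : Measure (Euc d)) : Measure ℝ :=
  (μ.withDensity fun y => ENNReal.ofReal (α (y, L) i)).map
    (fun y => ‖y - (L i).1 - r • ((L i).2 : Euc d)‖)

/-- Two finite measures on `ℝ^d` giving the same measure to every closed ball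
are equal: `μ` of every open set is at most `ν` of it, via the Besicovitch
covering theorem. -/
lemma open_measure_le_of_closedBall {E : Type*} [NormedAddCommGroup E] [NormedSpace ℝ E]
    [FiniteDimensional ℝ E] [MeasurableSpace E] [BorelSpace E]
    (μ ν : Measure E) [IsFiniteMeasure μ]
    (h : ∀ x r, μ (Metric.closedBall x r) = ν (Metric.closedBall x r))
    {U : Set E} (hU : IsOpen U) : μ U ≤ ν U := by
  obtain ⟨t, r, t_count, ts, hr, hcov, hdisj⟩ :=
    Besicovitch.exists_disjoint_closedBall_covering_ae μ
      (fun x => {ρ | Metric.closedBall x ρ ⊆ U}) U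
      (by
        intro x hx δ hδ
        obtain ⟨ε, hε, hb⟩ := Metric.isOpen_iff.mp hU x hx
        refine ⟨min (ε/2) (δ/2), ?_, by positivity, ?_⟩
        · exact fun y hy => hb (lt_of_le_of_lt (Metric.mem_closedBall.mp hy)
            (lt_of_le_of_lt (min_le_left _ _) (by linarith)))
        · exact lt_of_le_of_lt (min_le_right _ _) (by linarith))
      (fun _ => 1) (fun _ _ => one_pos)
  set A := ⋃ x ∈ t, Metric.closedBall x (r x) with hA
  have hAsub : A ⊆ U := Set.iUnion₂_subset fun x hx => (hr x hx).1
  have hmb : ∀ x ∈ t, MeasurableSet (Metric.closedBall x (r x)) :=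
    fun x _ => measurableSet_closedBall
  calc μ U ≤ μ (A ∪ U \ A) := measure_mono (Set.diff_subset_iff.mp subset_rfl)
    _ ≤ μ A + μ (U \ A) := measure_union_le _ _
    _ = μ A := by rw [hcov, add_zero]
    _ = ∑' x : t, μ (Metric.closedBall x (r x)) := measure_biUnion t_count hdisj hmb
    _ = ∑' x : t, ν (Metric.closedBall x (r x)) := by simp only [h]
    _ = ν A := (measure_biUnion t_count hdisj hmb).symm
    _ ≤ ν U := measure_mono hAsub

/-- Two finite Borel measures on a finite-dimensional real normed space giving
the same measure to every closed ball are equal. -/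
lemma measure_ext_of_closedBall {E : Type*} [NormedAddCommGroup E] [NormedSpace ℝ E]
    [FiniteDimensional ℝ E] [MeasurableSpace E] [BorelSpace E]
    (μ ν : Measure E) [IsFiniteMeasure μ] [IsFiniteMeasure ν]
    (h : ∀ x r, μ (Metric.closedBall x r) = ν (Metric.closedBall x r)) : μ = ν := by
  have hopen : ∀ U : Set E, IsOpen U → μ U = ν U := fun U hU =>
    le_antisymm (open_measure_le_of_closedBall μ ν h hU)
      (open_measure_le_of_closedBall ν μ (fun x r => (h x r).symm) hU)
  refine ext_of_generate_finite {s : Set E | IsOpen s} ?_ isPiSystem_isOpen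
    (fun s hs => hopen s hs) (hopen _ isOpen_univ)
  exact BorelSpace.measurable_eq

/-- Injectivity of the Circular Radon Transform on Systems of Lines
(measure form). -/
theorem circular_radon_transform_systems_of_lines_injective_measure
    (d k : ℕ) (hd : 1 ≤ d) (hk : 1 ≤ k)
    (α : Euc d × LineSystem d k → Fin k → ℝ)
    (hα_cont : Continuous α)
    (hα_simplex : ∀ p, α p ∈ stdSimplex ℝ (Fin k))
    (hα_inv : ∀ (Q : Euc d ≃ₗᵢ[ℝ] Euc d) (a y : Euc d) (L : LineSystem d k),
      α (Q y + a, actLine Q a L) = α (y, L))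
    (μ ν : Measure (Euc d)) [IsFiniteMeasure μ] [IsFiniteMeasure ν]
    (heq : ∀ (L : LineSystem d k) (r : ℝ), 0 ≤ r → ∀ (i : Fin k),
      circBranch α L r i μ = circBranch α L r i ν) :
    μ = ν := by
  -- a unit vector
  have hθv : ‖(EuclideanSpace.single (⟨0, hd⟩ : Fin d) (1 : ℝ) : Euc d)‖ = 1 := by
    simp [EuclideanSpace.norm_single]
  set θ₀ : Sph d := ⟨_, mem_sphere_zero_iff_norm.mpr hθv⟩
  apply measure_ext_of_closedBall
  intro x s
  set L : LineSystem d k := fun _ => (x, θ₀) with hL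
  set f : Euc d → ℝ := fun y => ‖y - x‖ with hf
  have hfc : Continuous f := continuous_norm.comp (continuous_id.sub continuous_const)
  have hfm : Measurable f := hfc.measurable
  -- continuity/measurability of the weights
  have gm : ∀ i : Fin k, Measurable fun y : Euc d => ENNReal.ofReal (α (y, L) i) := by
    intro i
    exact ENNReal.measurable_ofReal.comp
      (((continuous_apply i).comp (hα_cont.comp (continuous_id.prodMk continuous_const))).measurable)
  -- summing the branches reconstructs the pushforward under f
  have hsum : ∀ (ρ : Measure (Euc d)) (t : Set ℝ), MeasurableSet t →
      (ρ.map f) t = ∑ i : Fin k, circBranch α L 0 i ρ t := by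
    intro ρ t ht
    have h1 : ∀ y : Euc d, ∑ i : Fin k, ENNReal.ofReal (α (y, L) i) = 1 := by
      intro y
      rw [← ENNReal.ofReal_sum_of_nonneg (fun i _ => (hα_simplex (y, L)).1 i),
        (hα_simplex (y, L)).2, ENNReal.ofReal_one]
    have hstep : ρ (f ⁻¹' t) = ∫⁻ y in f ⁻¹' t, ∑ i : Fin k, ENNReal.ofReal (α (y, L) i) ∂ρ := by
      simp [h1]
    rw [Measure.map_apply hfm ht, hstep, lintegral_finset_sum _ (fun i _ => gm i)]
    refine Finset.sum_congr rfl fun i _ => ?_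
    have hfi : (fun y : Euc d => ‖y - (L i).1 - (0 : ℝ) • ((L i).2 : Euc d)‖) = f := by
      funext y; simp [hL, hf]
    rw [circBranch, hfi, Measure.map_apply hfm ht, withDensity_apply _ (hfm ht)]
  have hmaps : μ.map f = ν.map f := by
    ext t ht
    rw [hsum μ t ht, hsum ν t ht]
    exact Finset.sum_congr rfl fun i _ => by rw [heq L 0 le_rfl i]
  have hball : Metric.closedBall x s = f ⁻¹' Set.Iic s := by
    ext y; simp [hf, Metric.mem_closedBall, dist_eq_norm]
  calc μ (Metric.closedBall x s) = (μ.map f) (Set.Iic s) := by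
        rw [Measure.map_apply hfm measurableSet_Iic, hball]
    _ = (ν.map f) (Set.Iic s) := by rw [hmaps]
    _ = ν (Metric.closedBall x s) := by
        rw [Measure.map_apply hfm measurableSet_Iic, hball]
end
end

section
/- Injectivity of the Spatial Radon Transform on Systems of Lines (Theorem 4.2, measure form): Let d, d_θ, k ≥ 1, let h : ℝ^d → ℝ^{d_θ} be an injective continuous map, and let α : ℝ^{d_θ} × (ℝ^{d_θ} × S^{d_θ-1})^k → Δ_{k-1} be an E(d_θ)-invariant splitting map. Let μ, ν be finite Borel measures on ℝ^d. If for every system of k lines 𝓛 = ((x_1,θ_1),…,(x_k,θ_k)) in ℝ^{d_θ} and every index i ∈ {1,…,k}, the i-th branch of the Spatial Radon Transform on Systems of Lines of μ equals the i-th branch of the Spatial Radon Transform on Systems of Lines of ν, then μ = ν. -/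
open MeasureTheory
open scoped InnerProductSpace

noncomputable section

/-- The `i`-th branch of the Spatial Radon Transform on Systems of Lines of a
measure `μ`: push forward the measure `μ` weighted with density `α(h(·),𝓛)_i`
under `y ↦ ⟪h(y) − x_i, θ_i⟫`. -/
def spatialBranch {d dθ k : ℕ} (h : Euc d → Euc dθ)
    (α : Euc dθ × LineSystem dθ k → Fin k → ℝ)
    (L : LineSystem dθ k) (i : Fin k) (μ : Measure (Euc d)) : Measure ℝ :=
  (μ.withDensity fun y => ENNReal.ofReal (α (h y, L) i)).map
    (fun y => ⟪h y - (L i).1, ((L i).2 : Euc dθ)⟫_ℝ)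

/-!
Taking all `k` lines equal to one line `(0, θ)`, the splitting weights sum to `1`, so the
branches add up to the projection `⟪h ·, θ⟫` of `μ`. Hence the pushforwards `h_* μ` and `h_* ν`
have the same projection onto every direction, and so the same characteristic function
(Cramér–Wold). Finally `h`, continuous and injective on a Polish space, is a measurable
embedding, so `h_*` is injective on measures.
-/

lemma exists_norm_eq_one_eq_smul {E : Type*} [NormedAddCommGroup E] [NormedSpace ℝ E]
    [Nontrivial E] (t : E) : ∃ r : ℝ, ∃ θ : E, ‖θ‖ = 1 ∧ t = r • θ := by
  rcases eq_or_ne t 0 with rfl | ht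
  · obtain ⟨θ, hθ⟩ := exists_norm_eq E zero_le_one
    exact ⟨0, θ, hθ, (zero_smul ℝ θ).symm⟩
  · refine ⟨‖t‖, ‖t‖⁻¹ • t, norm_smul_inv_norm ht, ?_⟩
    rw [smul_smul, mul_inv_cancel₀ (norm_ne_zero_iff.mpr ht), one_smul]

namespace MeasureTheory

section CramerWold

variable {E : Type*} [NormedAddCommGroup E] [InnerProductSpace ℝ E] [MeasurableSpace E]
  [BorelSpace E]

lemma charFun_smul_eq_charFun_map_inner (μ : Measure E) (r : ℝ) (θ : E) :
    charFun μ (r • θ) = charFun (μ.map fun x => ⟪x, θ⟫_ℝ) r := by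
  rw [charFun_apply, charFun_apply_real, integral_map (by fun_prop) (by fun_prop)]
  simp_rw [inner_smul_right, Complex.ofReal_mul]

theorem Measure.ext_of_map_inner_of_norm_eq_one [CompleteSpace E] [SecondCountableTopology E]
    [Nontrivial E] {μ ν : Measure E} [IsFiniteMeasure μ] [IsFiniteMeasure ν]
    (h : ∀ θ : E, ‖θ‖ = 1 → μ.map (fun x => ⟪x, θ⟫_ℝ) = ν.map (fun x => ⟪x, θ⟫_ℝ)) :
    μ = ν := by
  refine Measure.ext_of_charFun (funext fun t => ?_)
  obtain ⟨r, θ, hθ, rfl⟩ := exists_norm_eq_one_eq_smul t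
  rw [charFun_smul_eq_charFun_map_inner, charFun_smul_eq_charFun_map_inner, h θ hθ]

end CramerWold

open scoped ENNReal in
theorem Measure.sum_withDensity_eq_self {X ι : Type*} [MeasurableSpace X] [Fintype ι]
    (μ : Measure X) {w : ι → X → ℝ≥0∞} (hw : ∀ i, Measurable (w i))
    (hsum : ∀ x, ∑ i, w i x = 1) :
    ∑ i, μ.withDensity (w i) = μ := by
  ext s hs
  simp_rw [Measure.finsetSum_apply, withDensity_apply _ hs]
  rw [← lintegral_finsetSum _ fun i _ => hw i]
  simp [hsum]

end MeasureTheory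

theorem sum_spatialBranch_of_const_lines {d dθ k : ℕ} {h : Euc d → Euc dθ} (hh : Measurable h)
    {α : Euc dθ × LineSystem dθ k → Fin k → ℝ} (x : Euc dθ) (θ : Sph dθ)
    (hα_meas : Measurable fun z => α (z, fun _ => (x, θ)))
    (hα_simplex : ∀ z, α (z, fun _ => (x, θ)) ∈ stdSimplex ℝ (Fin k)) (μ : Measure (Euc d)) :
    ∑ i, spatialBranch h α (fun _ => (x, θ)) i μ
      = (μ.map h).map fun z => ⟪z - x, (θ : Euc dθ)⟫_ℝ := by
  have hproj : Measurable fun z : Euc dθ => ⟪z - x, (θ : Euc dθ)⟫_ℝ := by fun_prop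
  have hweights : ∀ y, ∑ i, ENNReal.ofReal (α (h y, fun _ => (x, θ)) i) = 1 := fun y => by
    rw [← ENNReal.ofReal_sum_of_nonneg fun i _ => (hα_simplex (h y)).1 i,
      (hα_simplex (h y)).2, ENNReal.ofReal_one]
  calc ∑ i, spatialBranch h α (fun _ => (x, θ)) i μ
      = (∑ i, μ.withDensity fun y => ENNReal.ofReal (α (h y, fun _ => (x, θ)) i)).map
          ((fun z => ⟪z - x, (θ : Euc dθ)⟫_ℝ) ∘ h) :=
        (Measure.map_finset_sum' (hproj.comp hh).aemeasurable).symm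
    _ = (μ.map h).map fun z => ⟪z - x, (θ : Euc dθ)⟫_ℝ := by
      rw [Measure.sum_withDensity_eq_self μ _ hweights, Measure.map_map hproj hh]
      exact fun i => ((measurable_pi_apply i).comp (hα_meas.comp hh)).ennreal_ofReal

theorem spatial_radon_transform_systems_of_lines_injective_measure_general
    (d dθ k : ℕ) (hdθ : 1 ≤ dθ)
    (h : Euc d → Euc dθ) (h_inj : Function.Injective h) (h_cont : Continuous h)
    (α : Euc dθ × LineSystem dθ k → Fin k → ℝ)
    (hα_cont : Continuous α)
    (hα_simplex : ∀ p, α p ∈ stdSimplex ℝ (Fin k))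
    (μ ν : Measure (Euc d)) [IsFiniteMeasure μ] [IsFiniteMeasure ν]
    (heq : ∀ (L : LineSystem dθ k) (i : Fin k),
      spatialBranch h α L i μ = spatialBranch h α L i ν) :
    μ = ν := by
  have : Nontrivial (Euc dθ) := by
    have : Nonempty (Fin dθ) := ⟨⟨0, hdθ⟩⟩
    infer_instance
  refine (h_cont.measurableEmbedding h_inj).map_injective
    (Measure.ext_of_map_inner_of_norm_eq_one fun θ hθ => ?_)
  have hsum (m : Measure (Euc d)) := sum_spatialBranch_of_const_lines h_cont.measurable
    (α := α) 0 ⟨θ, mem_sphere_zero_iff_norm.mpr hθ⟩ (by fun_prop) (fun _ => hα_simplex _) m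
  simp only [sub_zero] at hsum
  rw [← hsum μ, ← hsum ν]
  simp only [heq]

/-- Injectivity of the Spatial Radon Transform on Systems of Lines
(measure form). -/
theorem spatial_radon_transform_systems_of_lines_injective_measure
    (d dθ k : ℕ) (hd : 1 ≤ d) (hdθ : 1 ≤ dθ) (hk : 1 ≤ k)
    (h : Euc d → Euc dθ) (h_inj : Function.Injective h) (h_cont : Continuous h)
    (α : Euc dθ × LineSystem dθ k → Fin k → ℝ)
    (hα_cont : Continuous α)
    (hα_simplex : ∀ p, α p ∈ stdSimplex ℝ (Fin k))
    (hα_inv : ∀ (Q : Euc dθ ≃ₗᵢ[ℝ] Euc dθ) (a z : Euc dθ) (L : LineSystem dθ k),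
      α (Q z + a, actLine Q a L) = α (z, L))
    (μ ν : Measure (Euc d)) [IsFiniteMeasure μ] [IsFiniteMeasure ν]
    (heq : ∀ (L : LineSystem dθ k) (i : Fin k),
      spatialBranch h α L i μ = spatialBranch h α L i ν) :
    μ = ν :=
  spatial_radon_transform_systems_of_lines_injective_measure_general d dθ k hdθ h h_inj h_cont α
    hα_cont hα_simplex μ ν heq
end
end

section
/- Well-definedness and mass preservation of the Spatial Radon Transform on Systems of Lines: Let d, d_θ, k ≥ 1, let h : ℝ^d → ℝ^{d_θ} be a continuous map, let α : ℝ^{d_θ} × (ℝ^{d_θ} × S^{d_θ-1})^k → Δ_{k-1} be a splitting map, and let 𝓛 = ((x_1,θ_1),…,(x_k,θ_k)) be a system of k lines in ℝ^{d_θ}. Then for every finite Borel measure μ on ℝ^d, the total masses of the k branches of the Spatial Radon Transform on Systems of Lines of μ sum to the total mass of μ, i.e. ∑_{i=1}^k ((μ.withDensity (y ↦ ENNReal.ofReal (α(h(y),𝓛)_i))).map (y ↦ ⟪h(y) − x_i, θ_i⟫)) (Set.univ) = μ (Set.univ). In particular, if μ is a probability measure then the sum of the k branch measures is a probability measure on ℝ.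 -/
open MeasureTheory
open scoped InnerProductSpace

noncomputable section

/-- Well-definedness and mass preservation of the Spatial Radon Transform on
Systems of Lines: the total masses of the `k` branches sum to the total mass of
`μ`; in particular, if `μ` is a probability measure then the sum of the `k`
branch measures is a probability measure on `ℝ`. -/
theorem spatial_radon_transform_systems_of_lines_mass_preservation
    (d dθ k : ℕ) (hd : 1 ≤ d) (hdθ : 1 ≤ dθ) (hk : 1 ≤ k)
    (h : Euc d → Euc dθ) (h_cont : Continuous h)
    (α : Euc dθ × LineSystem dθ k → Fin k → ℝ)
    (hα_cont : Continuous α)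
    (hα_simplex : ∀ p, α p ∈ stdSimplex ℝ (Fin k))
    (L : LineSystem dθ k)
    (μ : Measure (Euc d)) [IsFiniteMeasure μ] :
    (∑ i : Fin k, spatialBranch h α L i μ Set.univ) = μ Set.univ ∧
      (IsProbabilityMeasure μ →
        IsProbabilityMeasure (∑ i : Fin k, spatialBranch h α L i μ)) := by
  have hdens : ∀ i : Fin k, Measurable fun y => ENNReal.ofReal (α (h y, L) i) := by
    intro i
    exact ((hα_cont.comp (h_cont.prodMk continuous_const)).measurable.eval).ennreal_ofReal
  have hmeas : ∀ i : Fin k, spatialBranch h α L i μ Set.univ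
      = ∫⁻ y, ENNReal.ofReal (α (h y, L) i) ∂μ := by
    intro i
    rw [spatialBranch, Measure.map_apply (by exact (((h_cont.sub continuous_const).inner continuous_const).measurable)) MeasurableSet.univ]
    simp [lintegral_withDensity_eq_lintegral_mul _ (hdens i)]
  have key : (∑ i : Fin k, spatialBranch h α L i μ Set.univ) = μ Set.univ := by
    simp_rw [hmeas]
    rw [← lintegral_finset_sum _ (fun i _ => hdens i)]
    have hone : ∀ y : Euc d, (∑ i : Fin k, ENNReal.ofReal (α (h y, L) i)) = 1 := by
      intro y
      rw [← ENNReal.ofReal_sum_of_nonneg (fun i _ => (hα_simplex _).1 i)]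
      simp [(hα_simplex (h y, L)).2]
    simp [hone]
  refine ⟨key, fun hp => ?_⟩
  constructor
  rw [Measure.coe_finset_sum, Finset.sum_apply, key, measure_univ]
end
end
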